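/- Let 𝒢 be a sub-σ-field of ℋ, Ψ = P[A | 𝒢] a version of the conditional probability with values in [0,1], and B(t) = L({Ψ > t}, t) its Brier curve. Then for every (1−P[A])-quantile t* of Ψ, i.e. every t* with P[Ψ < t*] ≤ 1 − P[A] ≤ P[Ψ ≤ t*], the Brier curve attains its maximum at t*: max_{0 ≤ t ≤ 1} B(t) = B(t*). -/

import Mathlib

open MeasureTheory

/-- Cost-weighted mean loss `L(H, t) = (1 - t) P[A ∩ Hᶜ] + t P[Aᶜ ∩ H]`. -/
noncomputable def cwLoss {Ω : Type*} {mΩ : MeasurableSpace Ω} (P : Measure Ω) (A H : Set Ω)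
    (t : ℝ) : ℝ :=
  (1 - t) * (P (A ∩ Hᶜ)).toReal + t * (P (Aᶜ ∩ H)).toReal

/-!
Since `{Ψ > t}` is `𝒢`-measurable and `Ψ` is a version of `P[A | 𝒢]`, we have
`P[A ∩ {Ψ ≤ t}] = E[Ψ; Ψ ≤ t]`, which turns the Brier curve into `B(t) = E[min (Ψ, t)] - P[A] t`.
This is concave in `t`, with right derivative `P[Ψ > t] - P[A]` and left derivative
`P[Ψ ≥ t] - P[A]`; the quantile condition on `t*` says exactly that the first is `≤ 0` and the
second `≥ 0` at `t*`, so `t*` is a maximiser.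
-/

theorem min_sub_min_le_indicator_Ioi {s t : ℝ} (hst : s ≤ t) (x : ℝ) :
    min x t - min x s ≤ (Set.Ioi s).indicator (fun _ => t - s) x := by
  by_cases hx : s < x
  · rw [Set.indicator_of_mem (Set.mem_Ioi.2 hx), min_eq_right hx.le]
    linarith [min_le_right x t]
  · rw [Set.indicator_of_notMem (mt Set.mem_Ioi.1 hx), min_eq_left (not_lt.mp hx),
      min_eq_left ((not_lt.mp hx).trans hst), sub_self]

theorem indicator_Ici_le_min_sub_min {s t : ℝ} (hts : t ≤ s) (x : ℝ) :
    (Set.Ici s).indicator (fun _ => s - t) x ≤ min x s - min x t := by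
  by_cases hx : s ≤ x
  · rw [Set.indicator_of_mem (Set.mem_Ici.2 hx), min_eq_right hx, min_eq_right (hts.trans hx)]
  · rw [Set.indicator_of_notMem (mt Set.mem_Ici.1 hx), sub_nonneg]
    exact min_le_min_left x hts

section

variable {Ω : Type*} {mΩ : MeasurableSpace Ω} {μ : Measure Ω}

theorem exists_le_and_exists_ge_of_quantile [IsProbabilityMeasure μ] {X : Ω → ℝ} {α s : ℝ}
    (hα₀ : 0 < α) (hα₁ : α < 1) (hlt : μ.real {ω | X ω < s} ≤ α)
    (hle : α ≤ μ.real {ω | X ω ≤ s}) : (∃ ω, X ω ≤ s) ∧ ∃ ω, s ≤ X ω := by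
  constructor
  · by_contra! h
    have hempty : {ω | X ω ≤ s} = ∅ := Set.eq_empty_of_forall_notMem fun ω hω => (h ω).not_ge hω
    rw [hempty, measureReal_empty] at hle
    linarith
  · by_contra! h
    have huniv : {ω | X ω < s} = Set.univ := Set.eq_univ_of_forall h
    rw [huniv, probReal_univ] at hlt
    linarith

theorem integrable_min_const [IsFiniteMeasure μ] {X : Ω → ℝ} (hX : Integrable X μ) (t : ℝ) :
    Integrable (fun ω => min (X ω) t) μ :=
  hX.inf (integrable_const t)

theorem integral_min_sub_mul_le_of_quantile [IsProbabilityMeasure μ] {X : Ω → ℝ}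
    (hXm : Measurable X) (hXi : Integrable X μ) {α s : ℝ}
    (hlt : μ.real {ω | X ω < s} ≤ α) (hle : α ≤ μ.real {ω | X ω ≤ s}) (t : ℝ) :
    ∫ ω, min (X ω) t ∂μ - (1 - α) * t ≤ ∫ ω, min (X ω) s ∂μ - (1 - α) * s := by
  have hmin := integrable_min_const hXi
  rcases le_total s t with hst | hts
  · have hgt : MeasurableSet {ω | s < X ω} := measurableSet_lt measurable_const hXm
    have hgt_eq : μ.real {ω | s < X ω} = 1 - μ.real {ω | X ω ≤ s} := by
      rw [← probReal_compl_eq_one_sub (measurableSet_le hXm measurable_const)]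
      simp only [Set.compl_ofPred, not_le]
    have hint := integral_mono (f := fun ω => min (X ω) t - min (X ω) s)
      ((hmin t).sub (hmin s)) ((integrable_const (t - s)).indicator hgt)
      fun ω => min_sub_min_le_indicator_Ioi hst (X ω)
    rw [integral_sub (hmin t) (hmin s), integral_indicator_const _ hgt, hgt_eq,
      smul_eq_mul] at hint
    linarith [mul_le_mul_of_nonneg_left hle (sub_nonneg.2 hst)]
  · have hge : MeasurableSet {ω | s ≤ X ω} := measurableSet_le measurable_const hXm
    have hge_eq : μ.real {ω | s ≤ X ω} = 1 - μ.real {ω | X ω < s} := by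
      rw [← probReal_compl_eq_one_sub (measurableSet_lt hXm measurable_const)]
      simp only [Set.compl_ofPred, not_lt]
    have hint := integral_mono (g := fun ω => min (X ω) s - min (X ω) t)
      ((integrable_const (s - t)).indicator hge) ((hmin s).sub (hmin t))
      fun ω => indicator_Ici_le_min_sub_min hts (X ω)
    rw [integral_sub (hmin s) (hmin t), integral_indicator_const _ hge, hge_eq,
      smul_eq_mul] at hint
    linarith [mul_le_mul_of_nonneg_left hlt (sub_nonneg.2 hts)]

theorem cwLoss_eq [IsFiniteMeasure μ] {A H : Set Ω} (hA : MeasurableSet A) (hH : MeasurableSet H)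
    (t : ℝ) : cwLoss μ A H t = μ.real (A ∩ Hᶜ) + t * (μ.real H - μ.real A) := by
  have hH_split : μ.real (H ∩ A) + μ.real (H \ A) = μ.real H := measureReal_inter_add_sdiff hA
  have hA_split : μ.real (A ∩ H) + μ.real (A \ H) = μ.real A := measureReal_inter_add_sdiff hH
  rw [Set.inter_comm H A, Set.sdiff_eq, Set.inter_comm H] at hH_split
  rw [Set.sdiff_eq] at hA_split
  simp only [cwLoss, ← measureReal_def]
  linear_combination t * hH_split - t * hA_split

theorem integral_min_eq_setIntegral_compl_add [IsFiniteMeasure μ] {X : Ω → ℝ} (hXm : Measurable X)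
    (hXi : Integrable X μ) (t : ℝ) :
    ∫ ω, min (X ω) t ∂μ = ∫ ω in {ω | X ω > t}ᶜ, X ω ∂μ + t * μ.real {ω | X ω > t} := by
  have hS : MeasurableSet {ω | X ω > t} := measurableSet_lt measurable_const hXm
  rw [← integral_add_compl hS (integrable_min_const hXi t),
    setIntegral_congr_fun hS fun ω (hω : t < X ω) => min_eq_right hω.le,
    setIntegral_congr_fun hS.compl fun ω (hω : ¬ t < X ω) => min_eq_left (not_lt.1 hω),
    setIntegral_const, smul_eq_mul, mul_comm, add_comm]

theorem setIntegral_eq_measureReal_inter_of_ae_eq_condExp [IsFiniteMeasure μ] {A : Set Ω}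
    (hA : MeasurableSet A) {mG : MeasurableSpace Ω} (hG : mG ≤ mΩ) {Ψ : Ω → ℝ}
    (hΨ : Ψ =ᵐ[μ] μ[A.indicator (fun _ => (1 : ℝ)) | mG]) {H : Set Ω}
    (hH : MeasurableSet[mG] H) : ∫ ω in H, Ψ ω ∂μ = μ.real (A ∩ H) := by
  rw [setIntegral_congr_ae (hG H hH) (hΨ.mono fun _ h _ => h),
    setIntegral_condExp hG ((integrable_const (1 : ℝ)).indicator hA) hH, setIntegral_indicator hA,
    setIntegral_const, smul_eq_mul, mul_one, Set.inter_comm]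

theorem cwLoss_superlevelSet_eq_integral_min [IsFiniteMeasure μ] {A : Set Ω}
    (hA : MeasurableSet A) {mG : MeasurableSpace Ω} (hG : mG ≤ mΩ) {Ψ : Ω → ℝ}
    (hΨm : Measurable[mG] Ψ)
    (hΨ : Ψ =ᵐ[μ] μ[A.indicator (fun _ => (1 : ℝ)) | mG]) (t : ℝ) :
    cwLoss μ A {ω | Ψ ω > t} t = ∫ ω, min (Ψ ω) t ∂μ - μ.real A * t := by
  have hS : MeasurableSet[mG] {ω | Ψ ω > t} := measurableSet_lt measurable_const hΨm
  rw [cwLoss_eq hA (hG _ hS), integral_min_eq_setIntegral_compl_add (hΨm.mono hG le_rfl)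
    (integrable_condExp.congr hΨ.symm),
    setIntegral_eq_measureReal_inter_of_ae_eq_condExp hA hG hΨ hS.compl]
  ring

end

theorem brier_curve_max_at_quantile_general
    {Ω : Type*} {mΩ : MeasurableSpace Ω} {P : Measure Ω} [IsProbabilityMeasure P]
    {A : Set Ω} (hA : MeasurableSet A) (hA0 : 0 < P A) (hA1 : P A < 1)
    {mH : MeasurableSpace Ω} (hH : mH ≤ mΩ)
    {mG : MeasurableSpace Ω} (hG : mG ≤ mH)
    {Ψ : Ω → ℝ} (hΨm : Measurable[mG] Ψ) (hΨ01 : ∀ ω, Ψ ω ∈ Set.Icc (0 : ℝ) 1)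
    (hΨ : Ψ =ᵐ[P] P[A.indicator (fun _ => (1 : ℝ)) | mG])
    (B : ℝ → ℝ) (hB : ∀ t, B t = cwLoss P A {ω | Ψ ω > t} t)
    (tstar : ℝ)
    (hquant : (P {ω | Ψ ω < tstar}).toReal ≤ 1 - (P A).toReal
      ∧ 1 - (P A).toReal ≤ (P {ω | Ψ ω ≤ tstar}).toReal) :
    tstar ∈ Set.Icc (0 : ℝ) 1 ∧ ∀ t ∈ Set.Icc (0 : ℝ) 1, B t ≤ B tstar := by
  simp only [← measureReal_def] at hquant
  have hGΩ : mG ≤ mΩ := hG.trans hH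
  have hpos : 0 < P.real A := ENNReal.toReal_pos hA0.ne' (measure_ne_top P A)
  have hlt_one : P.real A < 1 := by
    simpa [measureReal_def] using ENNReal.toReal_strict_mono ENNReal.one_ne_top hA1
  obtain ⟨⟨ω₀, hω₀⟩, ω₁, hω₁⟩ :=
    exists_le_and_exists_ge_of_quantile (by linarith) (by linarith) hquant.1 hquant.2
  refine ⟨⟨(hΨ01 ω₀).1.trans hω₀, hω₁.trans (hΨ01 ω₁).2⟩, fun t _ => ?_⟩
  have hmax := integral_min_sub_mul_le_of_quantile (hΨm.mono hGΩ le_rfl)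
    (integrable_condExp.congr hΨ.symm) hquant.1 hquant.2 t
  rw [hB, hB, cwLoss_superlevelSet_eq_integral_min hA hGΩ hΨm hΨ,
    cwLoss_superlevelSet_eq_integral_min hA hGΩ hΨm hΨ]
  rwa [sub_sub_cancel] at hmax

/-- **Proposition 7, item 5 (maximiser of the Brier curve)**: for a `[0,1]`-valued version
`Ψ` of `P[A | 𝒢]`, `𝒢 ⊆ ℋ`, every `(1 − P[A])`-quantile `t*` of `Ψ` lies in `[0, 1]` and
maximises the Brier curve `B(t) = L({Ψ > t}, t)` over `[0, 1]`:
`max_{0 ≤ t ≤ 1} B(t) = B(t*)`. -/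
theorem brier_curve_max_at_quantile
    {Ω : Type*} {mΩ : MeasurableSpace Ω} {P : Measure Ω} [IsProbabilityMeasure P]
    {A : Set Ω} (hA : MeasurableSet A) (hA0 : 0 < P A) (hA1 : P A < 1)
    {mH : MeasurableSpace Ω} (hH : mH ≤ mΩ) (hAH : ¬ MeasurableSet[mH] A)
    {mG : MeasurableSpace Ω} (hG : mG ≤ mH)
    {Ψ : Ω → ℝ} (hΨm : Measurable[mG] Ψ) (hΨ01 : ∀ ω, Ψ ω ∈ Set.Icc (0 : ℝ) 1)
    (hΨ : Ψ =ᵐ[P] P[A.indicator (fun _ => (1 : ℝ)) | mG])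
    (B : ℝ → ℝ) (hB : ∀ t, B t = cwLoss P A {ω | Ψ ω > t} t)
    (tstar : ℝ)
    (hquant : (P {ω | Ψ ω < tstar}).toReal ≤ 1 - (P A).toReal
      ∧ 1 - (P A).toReal ≤ (P {ω | Ψ ω ≤ tstar}).toReal) :
    tstar ∈ Set.Icc (0 : ℝ) 1 ∧ ∀ t ∈ Set.Icc (0 : ℝ) 1, B t ≤ B tstar :=
  brier_curve_max_at_quantile_general hA hA0 hA1 hH hG hΨm hΨ01 hΨ B hB tstar hquant
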